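/- Let (𝓔ₙ⁰)_{n∈ℕ} satisfy hypotheses A₁ and A₃ with 𝓖(𝓔₀⁰) edgeless, let (Mₙ)_{n≥1} satisfy hypotheses B₁, B₂, B₃ and B₄, and let Ψ = lim Ψₙ and g = lim gₙ. If F is a compact g-invariant subset of M such that Ψ(F) = M, then F = M. -/

import Mathlib

open Set Function MeasureTheory Topology Filter

noncomputable section

variable {M : Type*}

section Defs
variable [TopologicalSpace M]

/-- A rectangle of `M`: a subset homeomorphic to the closed unit ball of `ℝ^d`. -/
def IsRectangle (d : ℕ) (X : Set M) : Prop :=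
  Nonempty (X ≃ₜ (Metric.closedBall (0 : EuclideanSpace ℝ (Fin d)) 1 :
    Set (EuclideanSpace ℝ (Fin d))))

/-- A collection of rectangles: a finite family of pairwise disjoint rectangles. -/
def IsRectCollection (d : ℕ) (𝓔 : Set (Set M)) : Prop :=
  𝓔.Finite ∧ (∀ X ∈ 𝓔, IsRectangle d X) ∧ 𝓔.Pairwise Disjoint

/-- The union `E` of the rectangles of a collection `𝓔`. -/
def collUnion (𝓔 : Set (Set M)) : Set M := ⋃₀ 𝓔

/-- The collection `𝓔ⁿ = ⋃_{|k| ≤ n} R^k(𝓔)`. -/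
def iterColl (R : M ≃ₜ M) (𝓔 : Set (Set M)) (n : ℕ) : Set (Set M) :=
  {Y | ∃ k : ℤ, |k| ≤ (n : ℤ) ∧ ∃ X ∈ 𝓔, Y = (R.toEquiv ^ k) '' X}

/-- `𝓔` is `p` times iterable. -/
def IterableColl (R : M ≃ₜ M) (𝓔 : Set (Set M)) (p : ℕ) : Prop :=
  ∀ X ∈ 𝓔, ∀ X' ∈ 𝓔, ∀ k l : ℤ, |k| ≤ (p : ℤ) → |l| ≤ (p : ℤ) →
    Disjoint ((R.toEquiv ^ k) '' X) ((R.toEquiv ^ l) '' X') ∨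
      (R.toEquiv ^ k) '' X = (R.toEquiv ^ l) '' X'

/-- The oriented graph `𝓖(𝓔)` (vertices the elements of `𝓔`, an edge from `X` to `R(X)`)
has no cycle. -/
def HasNoCycle (R : M ≃ₜ M) (𝓔 : Set (Set M)) : Prop :=
  ¬ ∃ (X : Set M) (p : ℕ), X ∈ 𝓔 ∧ 1 ≤ p ∧
      (∀ i : ℕ, i ≤ p → (R.toEquiv ^ (i : ℤ)) '' X ∈ 𝓔) ∧ (R.toEquiv ^ (p : ℤ)) '' X = X

/-- The oriented graph `𝓖(𝓔)` has no edge. -/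
def EdgelessGraph (R : M ≃ₜ M) (𝓔 : Set (Set M)) : Prop :=
  ∀ X ∈ 𝓔, (R : M → M) '' X ∉ 𝓔

/-- `𝓕` refines `𝓔`. -/
def Refines (𝓕 𝓔 : Set (Set M)) : Prop :=
  (∀ X ∈ 𝓔, ∃ Y ∈ 𝓕, Y ⊆ X) ∧
    ∀ X ∈ 𝓔, ∀ Y ∈ 𝓕, Disjoint X Y ∨ Y ⊆ interior X

/-- `𝓕` is compatible with `𝓔` for `p` iterates. -/
def CompatibleFor (R : M ≃ₜ M) (𝓕 𝓔 : Set (Set M)) (p : ℕ) : Prop :=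
  collUnion 𝓕 ⊆ collUnion 𝓔 ∧
    ∀ k : ℤ, |k| ≤ 2 * (p : ℤ) + 1 →
      (R.toEquiv ^ k) '' collUnion 𝓕 ∩ collUnion 𝓔 ⊆ collUnion 𝓕

/-- Hypothesis A₁. -/
def HypA1 (R : M ≃ₜ M) (𝓔 : ℕ → Set (Set M)) : Prop :=
  (∀ n, IterableColl R (𝓔 n) (n + 1) ∧ HasNoCycle R (iterColl R (𝓔 n) n)) ∧
  (∀ m n, m < n → Refines (iterColl R (𝓔 n) (n + 1)) (iterColl R (𝓔 m) (m + 1))) ∧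
  (∀ n, CompatibleFor R (𝓔 (n + 1)) (𝓔 n) (n + 1))

/-- Hypothesis A₂ (no isolated point). -/
def HypA2 (𝓔 : ℕ → Set (Set M)) : Prop :=
  ∀ n, ∀ X ∈ 𝓔 n, ∃ Y ∈ 𝓔 (n + 1), ∃ Z ∈ 𝓔 (n + 1), Y ≠ Z ∧ Y ⊆ X ∧ Z ⊆ X

/-- The set `K = ⋂ₙ Eₙ⁰`. -/
def limitK (𝓔 : ℕ → Set (Set M)) : Set M := ⋂ n, collUnion (𝓔 n)

/-- `Ψₙ = Mₙ ∘ ⋯ ∘ M₁`, `Ψ₀ = id`. -/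
def Psi (Mseq : ℕ → M ≃ₜ M) : ℕ → M ≃ₜ M
  | 0 => Homeomorph.refl M
  | n + 1 => (Psi Mseq n).trans (Mseq (n + 1))

/-- `gₙ = Ψₙ⁻¹ ∘ R ∘ Ψₙ`. -/
def gSeq (R : M ≃ₜ M) (Mseq : ℕ → M ≃ₜ M) (n : ℕ) : M ≃ₜ M :=
  ((Psi Mseq n).trans R).trans (Psi Mseq n).symm

/-- The support of a homeomorphism. -/
def homeoSupport (f : M ≃ₜ M) : Set M := closure {x | f x ≠ x}

/-- Hypothesis B₁ (support). -/
def HypB1 (R : M ≃ₜ M) (𝓔 : ℕ → Set (Set M)) (Mseq : ℕ → M ≃ₜ M) : Prop :=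
  ∀ n : ℕ, homeoSupport (Mseq (n + 1)) ⊆ collUnion (iterColl R (𝓔 n) n)

/-- Hypothesis B₂ (commutation). -/
def HypB2 (R : M ≃ₜ M) (𝓔 : ℕ → Set (Set M)) (Mseq : ℕ → M ≃ₜ M) : Prop :=
  ∀ n : ℕ, ∀ X ∈ iterColl R (𝓔 n) n, (R : M → M) '' X ∈ iterColl R (𝓔 n) n →
    ∀ x ∈ X, Mseq (n + 1) (R x) = R (Mseq (n + 1) x)

end Defs

section MetricDefs
variable [MetricSpace M]

/-- Hypothesis A₃ (decay of the collections of rectangles). -/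
def HypA3 (R : M ≃ₜ M) (𝓔 : ℕ → Set (Set M)) : Prop :=
  ∀ ε : ℝ, 0 < ε → ∃ N : ℕ, ∀ n ≥ N, ∀ X ∈ iterColl R (𝓔 n) n, Metric.diam X ≤ ε

/-- Hypothesis B₃ (convergence). -/
def HypB3 (R : M ≃ₜ M) (𝓔 : ℕ → Set (Set M)) (Mseq : ℕ → M ≃ₜ M) : Prop :=
  ∀ ε : ℝ, 0 < ε → ∃ N : ℕ, ∀ n ≥ N,
    ∀ X ∈ iterColl R (𝓔 (n + 1)) (n + 2) \ iterColl R (𝓔 (n + 1)) n,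
      Metric.diam ((Psi Mseq n) ⁻¹' X) ≤ ε

/-- Hypothesis B₄ (fibres are thin): the internal radius of `Ψₙ⁻¹(Eₙ⁰)` tends to `0`. -/
def HypB4 (𝓔 : ℕ → Set (Set M)) (Mseq : ℕ → M ≃ₜ M) : Prop :=
  ∀ ε : ℝ, 0 < ε → ∃ N : ℕ, ∀ n ≥ N, ∀ (x : M) (r : ℝ),
    Metric.ball x r ⊆ (Psi Mseq n) ⁻¹' collUnion (𝓔 n) → r ≤ ε

end MetricDefs

section TopDefs
variable [TopologicalSpace M]

/-- A Cantor set in `M`. -/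
def IsCantorSet (K : Set M) : Prop :=
  K.Nonempty ∧ IsCompact K ∧ Perfect K ∧ IsTotallyDisconnected K

/-- A totally disconnected compact set is tamely embedded if it admits arbitrarily small
neighbourhoods that are finite unions of pairwise disjoint rectangles. -/
def TamelyEmbedded (d : ℕ) (Q : Set M) : Prop :=
  ∀ U : Set M, IsOpen U → Q ⊆ U →
    ∃ 𝓑 : Set (Set M), IsRectCollection d 𝓑 ∧ Q ⊆ interior (collUnion 𝓑) ∧ collUnion 𝓑 ⊆ U

/-- A Cantor set is dynamically coherent for `R`. -/
def DynamicallyCoherent (R : M ≃ₜ M) (K : Set M) : Prop :=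
  (∀ k : ℤ, ∃ U : Set M, IsOpen U ∧ (R.toEquiv ^ k) '' K ∩ K = U ∩ K) ∧
  ∀ p : ℕ, ∀ x ∈ K,
    (∃ k : ℕ, 1 ≤ k ∧ ∀ i : ℕ, k ≤ i → i ≤ k + p → (R.toEquiv ^ (i : ℤ)) x ∉ K) ∧
    (∃ l : ℕ, 1 ≤ l ∧ ∀ i : ℕ, l ≤ i → i ≤ l + p → (R.toEquiv ^ (-(i : ℤ))) x ∉ K)

/-- A Cantor set is dynamically meagre for `R`: it has empty interior in
`Λ = Cl(⋃ᵢ Rⁱ(K))`. -/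
def DynamicallyMeagre (R : M ≃ₜ M) (K : Set M) : Prop :=
  ∀ U : Set M, IsOpen U → U ∩ closure (⋃ i : ℤ, (R.toEquiv ^ i) '' K) ⊆ K →
    U ∩ closure (⋃ i : ℤ, (R.toEquiv ^ i) '' K) = ∅

/-- `R` is minimal on the invariant set `Λ` (every orbit of a point of `Λ` is dense in `Λ`). -/
def MinimalOnSet (R : M ≃ₜ M) (Λ : Set M) : Prop :=
  ∀ x ∈ Λ, Λ ⊆ closure (Set.range fun n : ℤ => (R.toEquiv ^ n) x)

/-- `R` is transitive on the invariant set `Λ` (some orbit is dense in `Λ`). -/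
def TransitiveOnSet (R : M ≃ₜ M) (Λ : Set M) : Prop :=
  ∃ x ∈ Λ, Λ ⊆ closure (Set.range fun n : ℤ => (R.toEquiv ^ n) x)

end TopDefs

/-- The support of a measure. -/
def measSupport {M : Type*} [TopologicalSpace M] [MeasurableSpace M] (μ : Measure M) : Set M :=
  {x | ∀ U : Set M, IsOpen U → x ∈ U → 0 < μ U}

/-- The measurable dynamical system `S` restricted to the `S`-invariant set `A` is isomorphic
to the system `T` restricted to the `T`-invariant set `B`, in the sense of Béguin–Crovisier–Le
Roux: there are full invariant subsets `X₀ ⊆ A`, `Y₀ ⊆ B` and a bijective bimeasurable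
conjugacy between them. -/
def MeasIsoOn {X Y : Type*} [MeasurableSpace X] [MeasurableSpace Y]
    (S : X → X) (A : Set X) (T : Y → Y) (B : Set Y) : Prop :=
  ∃ (X₀ : Set X) (Y₀ : Set Y) (Θ : X → Y),
    X₀ ⊆ A ∧ Y₀ ⊆ B ∧ MeasurableSet X₀ ∧ MeasurableSet Y₀ ∧
    S '' X₀ = X₀ ∧ T '' Y₀ = Y₀ ∧
    (∀ μ : Measure X, IsProbabilityMeasure μ → Measure.map S μ = μ → μ A = 1 → μ X₀ = 1) ∧
    (∀ ν : Measure Y, IsProbabilityMeasure ν → Measure.map T ν = ν → ν B = 1 → ν Y₀ = 1) ∧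
    Set.BijOn Θ X₀ Y₀ ∧
    (∀ V : Set Y, MeasurableSet V → MeasurableSet (X₀ ∩ Θ ⁻¹' V)) ∧
    (∀ U : Set X, MeasurableSet U → MeasurableSet (Θ '' (X₀ ∩ U))) ∧
    (∀ x ∈ X₀, Θ (S x) = T (Θ x))

/-!
Over a point `z` off the `R`-orbit of `K = ⋂ₙ Eₙ⁰`, the fibre of `Ψ` is a single point. Once
the rectangles are not open, which `B₄` forces, each `Mₙ₊₁` preserves every rectangle of the
earlier collections. For `v` in the fibre, the orbit `Ψₙ(v)` then either eventually stops
moving, so that `Ψₙ⁻¹(z) = v` for large `n`, or it infinitely often enters a new rectangle `Y`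
of `𝓔ₙ₊₁ⁿ⁺²`, after which every `Ψₖ⁻¹(z)` is trapped with `v` in `Ψₙ⁻¹(Y)`, small by `B₃`; an
orbit staying in `Eₙⁿ` for good would put `z` on the orbit of `K`. Either way `Ψₖ⁻¹(z) → v`.
By `B₄` again `Ψ⁻¹(K)` has empty interior, hence so has each `Ψ⁻¹(Rʲ(K)) = gʲ(Ψ⁻¹(K))`, and
by Baire the points with a one-point fibre are dense. As `Ψ(F) = M`, they all lie in the
closed set `F`.
-/

namespace Homeomorph

variable {X : Type*} [TopologicalSpace X]

def toPermHom : (X ≃ₜ X) →* Equiv.Perm X where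
  toFun := Homeomorph.toEquiv
  map_one' := rfl
  map_mul' _ _ := rfl

@[simp]
theorem coe_toEquiv_zpow (h : X ≃ₜ X) (k : ℤ) : ⇑(h.toEquiv ^ k) = ⇑(h ^ k) := by
  change ⇑(toPermHom h ^ k) = ⇑(toPermHom (h ^ k))
  rw [map_zpow]

end Homeomorph

theorem Function.Semiconj.homeomorph_zpow {X Y : Type*} [TopologicalSpace X]
    [TopologicalSpace Y] {Ψ : X → Y} {g : X ≃ₜ X} {R : Y ≃ₜ Y} (h : Semiconj Ψ g R) (k : ℤ) :
    Semiconj Ψ ⇑(g ^ k) ⇑(R ^ k) := by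
  induction k using Int.induction_on with
  | zero => exact Semiconj.id_right
  | succ n ih =>
    rw [zpow_add_one, zpow_add_one]
    exact ih.comp_right h
  | pred n ih =>
    rw [zpow_sub_one, zpow_sub_one]
    exact ih.comp_right (h.inverses_right g.apply_symm_apply R.symm_apply_apply)

theorem Equiv.Perm.zpow_neg_apply_mem_of_mem_image {α : Type*} {σ : Equiv.Perm α} {k : ℤ}
    {X : Set α} {z : α} (hz : z ∈ (σ ^ k) '' X) : (σ ^ (-k)) z ∈ X := by
  rwa [mem_image_equiv, ← Equiv.Perm.inv_def, ← zpow_neg] at hz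

section Rectangle

variable [TopologicalSpace M] {d : ℕ} {X : Set M}

theorem IsRectangle.nonempty (h : IsRectangle d X) : X.Nonempty := by
  obtain ⟨e⟩ := h
  exact ⟨e.symm ⟨0, by simp⟩, (e.symm _).2⟩

theorem IsRectangle.isCompact (h : IsRectangle d X) : IsCompact X := by
  obtain ⟨e⟩ := h
  have := isCompact_iff_compactSpace.1 (isCompact_closedBall (0 : EuclideanSpace ℝ (Fin d)) 1)
  exact isCompact_iff_compactSpace.2 e.symm.compactSpace

theorem IsRectangle.isPreconnected (h : IsRectangle d X) : IsPreconnected X := by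
  obtain ⟨e⟩ := h
  have := isPreconnected_iff_preconnectedSpace.1
    (convex_closedBall (0 : EuclideanSpace ℝ (Fin d)) 1).isPreconnected
  exact isPreconnected_iff_preconnectedSpace.2
    (e.symm.surjective.denseRange.preconnectedSpace e.symm.continuous)

theorem IsRectangle.image (h : IsRectangle d X) (f : M ≃ₜ M) : IsRectangle d (f '' X) := by
  obtain ⟨e⟩ := h
  exact ⟨(f.image X).symm.trans e⟩

end Rectangle

section Support

variable [TopologicalSpace M]

theorem apply_eq_self_of_notMem_homeoSupport {f : M ≃ₜ M} {x : M} (hx : x ∉ homeoSupport f) :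
    f x = x :=
  not_not.1 fun h => hx (subset_closure h)

theorem homeoSupport_symm (f : M ≃ₜ M) : homeoSupport f.symm = homeoSupport f := by
  unfold homeoSupport
  congr 1
  ext x
  exact not_congr (f.symm_apply_eq.trans eq_comm)

theorem mapsTo_of_forall_subset_or_disjoint {𝓕 : Set (Set M)} {f : M ≃ₜ M}
    (hsupp : homeoSupport f ⊆ ⋃₀ 𝓕) (hf : ∀ O ∈ 𝓕, MapsTo f O O) {Y : Set M}
    (hY : ∀ O ∈ 𝓕, Disjoint Y O ∨ O ⊆ Y) : MapsTo f Y Y := by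
  intro p hp
  by_cases hpE : p ∈ ⋃₀ 𝓕
  · obtain ⟨O, hO, hpO⟩ := hpE
    rcases hY O hO with h | h
    · exact absurd hpO (disjoint_left.1 h hp)
    · exact h (hf O hO hpO)
  · rwa [apply_eq_self_of_notMem_homeoSupport fun hs => hpE (hsupp hs)]

/-- `f` fixes the points of `Y` on the boundary of `⋃₀ 𝓕`, which exist because `Y` is not open;
so the preconnected set `f '' Y ⊆ ⋃₀ 𝓕` meets `Y` and cannot leave it. -/
theorem mapsTo_of_homeoSupport_subset_sUnion [T2Space M] {𝓕 : Set (Set M)} (hfin : 𝓕.Finite)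
    (hcl : ∀ O ∈ 𝓕, IsClosed O) (hconn : ∀ O ∈ 𝓕, IsPreconnected O)
    (hopen : ∀ O ∈ 𝓕, ¬ IsOpen O) (hdisj : 𝓕.Pairwise Disjoint) {f : M ≃ₜ M}
    (hsupp : homeoSupport f ⊆ ⋃₀ 𝓕) {Y : Set M} (hY : Y ∈ 𝓕) : MapsTo f Y Y := by
  have hWcl : IsClosed (⋃₀ (𝓕 \ {Y})) := by
    rw [sUnion_eq_biUnion]
    exact (hfin.subset sdiff_subset).isClosed_biUnion fun O hO => hcl O hO.1
  set W := ⋃₀ (𝓕 \ {Y})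
  have hYW : Disjoint Y W :=
    disjoint_sUnion_right.2 fun O hO => hdisj hY hO.1 (Ne.symm hO.2)
  have hcover : ⋃₀ 𝓕 ⊆ Y ∪ W := by
    rw [← sUnion_insert, insert_sdiff_singleton, insert_eq_of_mem hY]
  have hfix : ∀ x ∈ closure (⋃₀ 𝓕)ᶜ, f x = x :=
    closure_minimal (fun x hx => apply_eq_self_of_notMem_homeoSupport fun hs => hx (hsupp hs))
      (isClosed_eq f.continuous continuous_id)
  obtain ⟨b, hbY, hb⟩ : ∃ b ∈ Y, b ∈ closure (⋃₀ 𝓕)ᶜ := by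
    obtain ⟨b, hbY, hbi⟩ := not_subset.1 fun h =>
      hopen Y hY (interior_eq_iff_isOpen.1 (interior_subset.antisymm h))
    refine ⟨b, hbY, closure_mono ?_ (hWcl.isOpen_compl.inter_closure
      ⟨disjoint_left.1 hYW hbY, by rwa [closure_compl]⟩)⟩
    rintro x ⟨hxW, hxY⟩ hx
    exact (hcover hx).elim hxY hxW
  have himage : f '' Y ⊆ ⋃₀ 𝓕 := by
    rintro _ ⟨y, hy, rfl⟩
    by_contra h
    rw [f.injective (apply_eq_self_of_notMem_homeoSupport fun hs => h (hsupp hs))] at h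
    exact h (subset_sUnion_of_mem hY hy)
  rcases isPreconnected_iff_subset_of_disjoint_closed.1
      ((hconn Y hY).image f f.continuous.continuousOn) Y W (hcl Y hY) hWcl
      (himage.trans hcover) (by rw [hYW.inter_eq, inter_empty]) with h | h
  · exact mapsTo_iff_image_subset.2 h
  · exact absurd (h ⟨b, hbY, hfix b hb⟩) (disjoint_left.1 hYW hbY)

end Support

section Collections

variable [TopologicalSpace M] {d : ℕ} {R : M ≃ₜ M}

theorem mem_iterColl_of_mem {𝓔 : Set (Set M)} {X : Set M} (hX : X ∈ 𝓔) (n : ℕ) :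
    X ∈ iterColl R 𝓔 n :=
  ⟨0, by simp, X, hX, by simp⟩

theorem iterColl_mono {𝓔 : Set (Set M)} {a b : ℕ} (h : a ≤ b) :
    iterColl R 𝓔 a ⊆ iterColl R 𝓔 b := by
  rintro Y ⟨k, hk, X, hX, rfl⟩
  exact ⟨k, hk.trans (by exact_mod_cast h), X, hX, rfl⟩

theorem Set.Finite.iterColl {𝓔 : Set (Set M)} (h : 𝓔.Finite) (n : ℕ) :
    (iterColl R 𝓔 n).Finite := by
  refine (((finite_Icc (-(n : ℤ)) n).prod h).image
    fun p : ℤ × Set M => (R.toEquiv ^ p.1) '' p.2).subset ?_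
  rintro Y ⟨k, hk, X, hX, rfl⟩
  exact ⟨(k, X), ⟨abs_le.1 hk, hX⟩, rfl⟩

theorem isRectangle_of_mem_iterColl {𝓔 : Set (Set M)} (h : ∀ X ∈ 𝓔, IsRectangle d X)
    {Y : Set M} {n : ℕ} (hY : Y ∈ iterColl R 𝓔 n) : IsRectangle d Y := by
  obtain ⟨k, -, X, hX, rfl⟩ := hY
  rw [Homeomorph.coe_toEquiv_zpow]
  exact (h X hX).image _

theorem not_isOpen_of_mem_iterColl {𝓔 : Set (Set M)} (h : ∀ X ∈ 𝓔, ¬ IsOpen X)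
    {Y : Set M} {n : ℕ} (hY : Y ∈ iterColl R 𝓔 n) : ¬ IsOpen Y := by
  obtain ⟨k, -, X, hX, rfl⟩ := hY
  rw [Homeomorph.coe_toEquiv_zpow, Homeomorph.isOpen_image]
  exact h X hX

theorem IterableColl.pairwise_disjoint {𝓔 : Set (Set M)} {n p : ℕ}
    (h : IterableColl R 𝓔 p) (hnp : n ≤ p) : (iterColl R 𝓔 n).Pairwise Disjoint := by
  rintro _ ⟨k, hk, X, hX, rfl⟩ _ ⟨l, hl, X', hX', rfl⟩ hne
  have hnp' : (n : ℤ) ≤ p := by exact_mod_cast hnp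
  exact (h X hX X' hX' k l (hk.trans hnp') (hl.trans hnp')).resolve_right hne

variable {𝓔 : ℕ → Set (Set M)}

theorem isClosed_limitK [T2Space M] (hrect : ∀ n, IsRectCollection d (𝓔 n)) :
    IsClosed (limitK 𝓔) :=
  isClosed_iInter fun n => by
    rw [collUnion, sUnion_eq_biUnion]
    exact (hrect n).1.isClosed_biUnion fun X hX => ((hrect n).2.1 X hX).isCompact.isClosed

theorem HypA1.disjoint_or_subset (hA1 : HypA1 R 𝓔) {m k : ℕ} (hmk : m ≤ k) {Y O : Set M}
    (hY : Y ∈ iterColl R (𝓔 m) m) (hO : O ∈ iterColl R (𝓔 k) k) : Disjoint Y O ∨ O ⊆ Y := by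
  rcases hmk.eq_or_lt with rfl | hlt
  · by_cases hYO : Y = O
    · exact Or.inr hYO.ge
    · exact Or.inl ((hA1.1 m).1.pairwise_disjoint m.le_succ hY hO hYO)
  · exact ((hA1.2.1 m k hlt).2 Y (iterColl_mono m.le_succ hY) O
      (iterColl_mono k.le_succ hO)).imp_right fun h => h.trans interior_subset

theorem HypA1.mem_interior_of_mem_limitK (hA1 : HypA1 R 𝓔) {z : M} (hz : z ∈ limitK 𝓔)
    (n : ℕ) : ∃ X ∈ 𝓔 n, z ∈ interior X := by
  obtain ⟨X, hX, hzX⟩ := mem_iInter.1 hz n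
  obtain ⟨X', hX', hzX'⟩ := mem_iInter.1 hz (n + 1)
  refine ⟨X, hX, ((hA1.2.1 n (n + 1) n.lt_succ_self).2 X (mem_iterColl_of_mem hX _) X'
    (mem_iterColl_of_mem hX' _)).resolve_left ?_ hzX'⟩
  exact not_disjoint_iff.2 ⟨z, hzX, hzX'⟩

theorem HypA1.disjoint_collUnion_of_notMem (hA1 : HypA1 R 𝓔) {m : ℕ} {Y : Set M}
    (hY : Y ∈ iterColl R (𝓔 (m + 1)) (m + 1)) {x : M} (hxY : x ∈ Y)
    (hx : x ∉ collUnion (iterColl R (𝓔 m) m)) : Disjoint Y (collUnion (iterColl R (𝓔 m) m)) :=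
  disjoint_sUnion_right.2 fun O hO =>
    ((hA1.disjoint_or_subset m.le_succ hO hY).resolve_right fun h => hx ⟨O, hO, h hxY⟩).symm

theorem collUnion_antitone (hc : ∀ n, CompatibleFor R (𝓔 (n + 1)) (𝓔 n) (n + 1)) :
    Antitone fun n => collUnion (𝓔 n) :=
  antitone_nat_of_succ_le fun n => (hc n).1

theorem subset_collUnion_of_mem_iterColl_succ
    (hc : ∀ n, CompatibleFor R (𝓔 (n + 1)) (𝓔 n) (n + 1)) {n : ℕ} {Y : Set M}
    (hY : Y ∈ iterColl R (𝓔 (n + 1)) n) : Y ⊆ collUnion (iterColl R (𝓔 n) n) := by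
  obtain ⟨k, hk, X, hX, rfl⟩ := hY
  rintro _ ⟨x, hx, rfl⟩
  obtain ⟨X', hX', hxX'⟩ := (hc n).1 (subset_sUnion_of_mem hX hx)
  exact ⟨_, ⟨k, hk, X', hX', rfl⟩, mem_image_of_mem _ hxX'⟩

/-- Write `z = R^{jₜ}(wₜ)` with `wₜ ∈ E⁰_{k₀+t}`. Since `wₛ = R^{jₛ₊₁-jₛ}(wₛ₊₁)` with a small
exponent, compatibility pushes each `wₛ` one level deeper at a time, so `w₀ ∈ K`. -/
theorem exists_zpow_mem_limitK (hc : ∀ n, CompatibleFor R (𝓔 (n + 1)) (𝓔 n) (n + 1))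
    {z : M} {k₀ : ℕ} (hz : ∀ k ≥ k₀, z ∈ collUnion (iterColl R (𝓔 k) k)) :
    ∃ j : ℤ, z ∈ (R.toEquiv ^ j) '' limitK 𝓔 := by
  have hsel : ∀ t : ℕ, ∃ j : ℤ, |j| ≤ ((k₀ + t : ℕ) : ℤ) ∧
      (R.toEquiv ^ (-j)) z ∈ collUnion (𝓔 (k₀ + t)) := by
    intro t
    obtain ⟨_, ⟨j, hj, X, hX, rfl⟩, hzY⟩ := hz (k₀ + t) (Nat.le_add_right _ _)
    exact ⟨j, hj, subset_sUnion_of_mem hX (Equiv.Perm.zpow_neg_apply_mem_of_mem_image hzY)⟩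
  choose j hj hjz using hsel
  have hdeep : ∀ t s, (R.toEquiv ^ (-j s)) z ∈ collUnion (𝓔 (k₀ + s + t)) := by
    intro t
    induction t with
    | zero => exact hjz
    | succ t ih =>
      intro s
      have hnext := ih (s + 1)
      rw [show k₀ + (s + 1) + t = k₀ + s + t + 1 by omega] at hnext
      have hstep : (R.toEquiv ^ (j (s + 1) - j s)) ((R.toEquiv ^ (-j (s + 1))) z) =
          (R.toEquiv ^ (-j s)) z := by
        rw [← Equiv.Perm.mul_apply, ← zpow_add]
        ring_nf
      have hδ : |j (s + 1) - j s| ≤ 2 * ((k₀ + s + t + 1 : ℕ) : ℤ) + 1 := by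
        have h₁ := hj (s + 1)
        have h₂ := hj s
        push_cast at h₁ h₂ ⊢
        linarith [abs_sub (j (s + 1)) (j s)]
      exact (hc (k₀ + s + t)).2 _ hδ ⟨⟨_, hnext, hstep⟩, ih s⟩
  refine ⟨j 0, (R.toEquiv ^ (-j 0)) z, mem_iInter.2 fun n => ?_, ?_⟩
  · exact collUnion_antitone hc (Nat.le_add_left n k₀) (by simpa using hdeep n 0)
  · rw [← Equiv.Perm.mul_apply, ← zpow_add, add_neg_cancel, zpow_zero, Equiv.Perm.one_apply]

end Collections

section Psi

variable [TopologicalSpace M] {Mseq : ℕ → M ≃ₜ M}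

theorem psi_succ_apply (n : ℕ) (x : M) : Psi Mseq (n + 1) x = Mseq (n + 1) (Psi Mseq n x) :=
  rfl

theorem psi_mem_of_mapsTo {Y : Set M} {m : ℕ} (hY : ∀ k ≥ m, MapsTo (Mseq (k + 1)) Y Y)
    {u : M} (hu : Psi Mseq m u ∈ Y) : ∀ k ≥ m, Psi Mseq k u ∈ Y := by
  intro k hk
  induction k, hk using Nat.le_induction with
  | base => exact hu
  | succ k hk ih => exact hY k hk ih

theorem psi_mem_of_mapsTo_symm {Y : Set M} {m : ℕ}
    (hY : ∀ k ≥ m, MapsTo (Mseq (k + 1)).symm Y Y) {u : M} :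
    ∀ k ≥ m, Psi Mseq k u ∈ Y → Psi Mseq m u ∈ Y := by
  intro k hk
  induction k, hk using Nat.le_induction with
  | base => exact id
  | succ k hk ih =>
    intro hu
    exact ih (by simpa only [psi_succ_apply, Homeomorph.symm_apply_apply] using hY k hk hu)

theorem psi_eq_of_forall_apply_eq {u : M} {n : ℕ}
    (h : ∀ k ≥ n, Mseq (k + 1) (Psi Mseq k u) = Psi Mseq k u) :
    ∀ k ≥ n, Psi Mseq k u = Psi Mseq n u := by
  intro k hk
  induction k, hk using Nat.le_induction with
  | base => rfl
  | succ k hk ih => rw [psi_succ_apply, h k hk, ih]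

end Psi

theorem frequently_not_and_succ {P : ℕ → Prop} (h : ∃ᶠ n in atTop, P n)
    (h' : ∃ᶠ n in atTop, ¬ P n) : ∃ᶠ n in atTop, ¬ P n ∧ P (n + 1) := by
  rw [frequently_atTop] at *
  intro a
  obtain ⟨b, hab, hb⟩ := h' a
  obtain ⟨c, hbc, hc⟩ := h b
  suffices ∀ c ≥ b, P c → ∃ n ≥ b, ¬ P n ∧ P (n + 1) by
    obtain ⟨n, hn, hPn⟩ := this c hbc hc
    exact ⟨n, hab.trans hn, hPn⟩
  intro c hc
  induction c, hc using Nat.le_induction with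
  | base => exact fun hPb => absurd hPb hb
  | succ c hc ih =>
    intro hPc
    by_cases hP : P c
    exacts [ih hP, ⟨c, hc, hP, hPc⟩]

section Dynamics

variable [TopologicalSpace M] {d : ℕ} {R : M ≃ₜ M} {𝓔 : ℕ → Set (Set M)}
  {Mseq : ℕ → M ≃ₜ M} {n₀ : ℕ} {Ψ : M → M}

def RectanglesInvariant (R : M ≃ₜ M) (𝓔 : ℕ → Set (Set M)) (Mseq : ℕ → M ≃ₜ M) (n₀ : ℕ) :
    Prop :=
  ∀ ⦃m k : ℕ⦄, m ≤ k → n₀ ≤ k → ∀ Y ∈ iterColl R (𝓔 m) m,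
    MapsTo (Mseq (k + 1)) Y Y ∧ MapsTo (Mseq (k + 1)).symm Y Y

theorem rectanglesInvariant_of_not_isOpen [T2Space M] (hrect : ∀ n, IsRectCollection d (𝓔 n))
    (hA1 : HypA1 R 𝓔) (hB1 : HypB1 R 𝓔 Mseq) (hopen : ∀ k ≥ n₀, ∀ X ∈ 𝓔 k, ¬ IsOpen X) :
    RectanglesInvariant R 𝓔 Mseq n₀ := by
  intro m k hmk hk Y hY
  have hrect' : ∀ O ∈ iterColl R (𝓔 k) k, IsRectangle d O :=
    fun O hO => isRectangle_of_mem_iterColl (hrect k).2.1 hO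
  have hmaps : ∀ f : M ≃ₜ M, homeoSupport f ⊆ collUnion (iterColl R (𝓔 k) k) →
      MapsTo f Y Y := fun f hf =>
    mapsTo_of_forall_subset_or_disjoint hf
      (fun O hO => mapsTo_of_homeoSupport_subset_sUnion ((hrect k).1.iterColl k)
        (fun O hO => (hrect' O hO).isCompact.isClosed) (fun O hO => (hrect' O hO).isPreconnected)
        (fun O hO => not_isOpen_of_mem_iterColl (hopen k hk) hO)
        ((hA1.1 k).1.pairwise_disjoint k.le_succ) hf hO)
      (fun O hO => hA1.disjoint_or_subset hmk hY hO)
  exact ⟨hmaps _ (hB1 k), hmaps _ ((homeoSupport_symm _).trans_subset (hB1 k))⟩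

theorem RectanglesInvariant.psi_mem (hinv : RectanglesInvariant R 𝓔 Mseq n₀) {m : ℕ}
    (hm : n₀ ≤ m) {Y : Set M} (hY : Y ∈ iterColl R (𝓔 m) m) {u : M}
    (hu : Psi Mseq m u ∈ Y) : ∀ k ≥ m, Psi Mseq k u ∈ Y :=
  psi_mem_of_mapsTo (fun _ hk => (hinv hk (hm.trans hk) Y hY).1) hu

theorem RectanglesInvariant.psi_mem_of_psi_mem (hinv : RectanglesInvariant R 𝓔 Mseq n₀)
    {m : ℕ} (hm : n₀ ≤ m) {Y : Set M} (hY : Y ∈ iterColl R (𝓔 m) m) {u : M} :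
    ∀ k ≥ m, Psi Mseq k u ∈ Y → Psi Mseq m u ∈ Y :=
  psi_mem_of_mapsTo_symm fun _ hk => (hinv hk (hm.trans hk) Y hY).2

theorem RectanglesInvariant.mem_of_psi_mem [T2Space M] (hinv : RectanglesInvariant R 𝓔 Mseq n₀)
    (hrect : ∀ n, IsRectCollection d (𝓔 n))
    (hΨ : ∀ u, Tendsto (fun n => Psi Mseq n u) atTop (𝓝 (Ψ u))) {m : ℕ} (hm : n₀ ≤ m)
    {Y : Set M} (hY : Y ∈ iterColl R (𝓔 m) m) {u : M} (hu : Psi Mseq m u ∈ Y) : Ψ u ∈ Y :=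
  (isRectangle_of_mem_iterColl (hrect m).2.1 hY).isCompact.isClosed.mem_of_tendsto (hΨ u)
    (eventually_atTop.2 ⟨m, hinv.psi_mem hm hY hu⟩)

theorem RectanglesInvariant.psi_mem_collUnion_of_mem_limitK
    (hinv : RectanglesInvariant R 𝓔 Mseq n₀) (hA1 : HypA1 R 𝓔)
    (hΨ : ∀ u, Tendsto (fun n => Psi Mseq n u) atTop (𝓝 (Ψ u))) {u : M}
    (hu : Ψ u ∈ limitK 𝓔) {n : ℕ} (hn : n₀ ≤ n) : Psi Mseq n u ∈ collUnion (𝓔 n) := by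
  obtain ⟨X, hX, hzX⟩ := hA1.mem_interior_of_mem_limitK hu n
  obtain ⟨k, hkX, hk⟩ :=
    (((hΨ u).eventually (isOpen_interior.mem_nhds hzX)).and (eventually_ge_atTop n)).exists
  exact ⟨X, hX, hinv.psi_mem_of_psi_mem hn (mem_iterColl_of_mem hX n) k hk (interior_subset hkX)⟩

theorem RectanglesInvariant.exists_zpow_mem_of_eventually_mem [T2Space M]
    (hinv : RectanglesInvariant R 𝓔 Mseq n₀) (hrect : ∀ n, IsRectCollection d (𝓔 n))
    (hA1 : HypA1 R 𝓔) (hΨ : ∀ u, Tendsto (fun n => Psi Mseq n u) atTop (𝓝 (Ψ u))) {v : M}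
    (h : ∀ᶠ m in atTop, Psi Mseq m v ∈ collUnion (iterColl R (𝓔 m) m)) :
    ∃ j : ℤ, Ψ v ∈ (R.toEquiv ^ j) '' limitK 𝓔 := by
  obtain ⟨n, hn⟩ := eventually_atTop.1 h
  refine exists_zpow_mem_limitK hA1.2.2 (k₀ := max n n₀) fun k hk => ?_
  obtain ⟨Y, hY, hvY⟩ := hn k (le_of_max_le_left hk)
  exact ⟨Y, hY, hinv.mem_of_psi_mem hrect hΨ (le_of_max_le_right hk) hY hvY⟩

theorem tendsto_psi_symm_of_eventually_notMem [T2Space M] (hB1 : HypB1 R 𝓔 Mseq)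
    (hΨ : ∀ u, Tendsto (fun n => Psi Mseq n u) atTop (𝓝 (Ψ u))) {v : M}
    (h : ∀ᶠ m in atTop, Psi Mseq m v ∉ collUnion (iterColl R (𝓔 m) m)) :
    Tendsto (fun k => (Psi Mseq k).symm (Ψ v)) atTop (𝓝 v) := by
  obtain ⟨n, hn⟩ := eventually_atTop.1 h
  have hconst : ∀ k ≥ n, Psi Mseq k v = Psi Mseq n v := psi_eq_of_forall_apply_eq fun k hk =>
    apply_eq_self_of_notMem_homeoSupport fun hs => hn k hk (hB1 k hs)
  have hlim : Ψ v = Psi Mseq n v := tendsto_nhds_unique (hΨ v)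
    (tendsto_const_nhds.congr' (eventually_atTop.2 ⟨n, fun k hk => (hconst k hk).symm⟩))
  refine tendsto_const_nhds.congr' (eventually_atTop.2 ⟨n, fun k hk => ?_⟩)
  show v = (Psi Mseq k).symm (Ψ v)
  rw [hlim, ← hconst k hk, Homeomorph.symm_apply_apply]

end Dynamics

section Metric

variable [MetricSpace M] {d : ℕ} {R : M ≃ₜ M} {𝓔 : ℕ → Set (Set M)}
  {Mseq : ℕ → M ≃ₜ M} {n₀ : ℕ} {Ψ : M → M}

theorem RectanglesInvariant.tendsto_psi_symm_of_frequently_entry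
    (hinv : RectanglesInvariant R 𝓔 Mseq n₀) (hrect : ∀ n, IsRectCollection d (𝓔 n))
    (hA1 : HypA1 R 𝓔) (hB1 : HypB1 R 𝓔 Mseq) (hB3 : HypB3 R 𝓔 Mseq)
    (hΨ : ∀ u, Tendsto (fun n => Psi Mseq n u) atTop (𝓝 (Ψ u))) {v : M}
    (h : ∃ᶠ m in atTop, Psi Mseq m v ∉ collUnion (iterColl R (𝓔 m) m) ∧
      Psi Mseq (m + 1) v ∈ collUnion (iterColl R (𝓔 (m + 1)) (m + 1))) :
    Tendsto (fun k => (Psi Mseq k).symm (Ψ v)) atTop (𝓝 v) := by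
  rw [Metric.tendsto_atTop]
  intro ε hε
  obtain ⟨N, hN⟩ := hB3 (ε / 2) (half_pos hε)
  obtain ⟨m, ⟨hout, Y, hY, hvY⟩, hm⟩ :=
    (h.and_eventually (eventually_ge_atTop (max N n₀))).exists
  have hfix : Psi Mseq (m + 1) v = Psi Mseq m v :=
    apply_eq_self_of_notMem_homeoSupport fun hs => hout (hB1 m hs)
  rw [hfix] at hvY
  have hdisj := hA1.disjoint_collUnion_of_notMem hY hvY hout
  have hnew : Y ∉ iterColl R (𝓔 (m + 1)) m := fun hY' =>
    disjoint_left.1 hdisj hvY (subset_collUnion_of_mem_iterColl_succ hA1.2.2 hY' hvY)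
  have hmaps : ∀ k ≥ m, MapsTo (Mseq (k + 1)).symm Y Y := by
    intro k hk
    rcases hk.eq_or_lt with rfl | hlt
    · intro y hy
      rwa [apply_eq_self_of_notMem_homeoSupport]
      rw [homeoSupport_symm]
      exact fun hs => disjoint_left.1 hdisj hy (hB1 _ hs)
    · exact (hinv hlt ((le_of_max_le_right hm).trans hlt.le) Y hY).2
  have hΨY : Ψ v ∈ Y := hinv.mem_of_psi_mem hrect hΨ ((le_of_max_le_right hm).trans m.le_succ) hY
    (by rwa [hfix])
  have hbdd : Bornology.IsBounded (Psi Mseq m ⁻¹' Y) :=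
    ((Psi Mseq m).isCompact_preimage.2
      (isRectangle_of_mem_iterColl (hrect _).2.1 hY).isCompact).isBounded
  refine ⟨m, fun k hk => ?_⟩
  have htrap : Psi Mseq m ((Psi Mseq k).symm (Ψ v)) ∈ Y :=
    psi_mem_of_mapsTo_symm hmaps k hk (by rwa [Homeomorph.apply_symm_apply])
  calc dist ((Psi Mseq k).symm (Ψ v)) v ≤ Metric.diam (Psi Mseq m ⁻¹' Y) :=
        Metric.dist_le_diam_of_mem hbdd htrap hvY
    _ ≤ ε / 2 := hN m (le_of_max_le_left hm) Y ⟨iterColl_mono (m + 1).le_succ hY, hnew⟩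
    _ < ε := half_lt_self hε

theorem RectanglesInvariant.eq_of_notMem_orbit (hinv : RectanglesInvariant R 𝓔 Mseq n₀)
    (hrect : ∀ n, IsRectCollection d (𝓔 n)) (hA1 : HypA1 R 𝓔) (hB1 : HypB1 R 𝓔 Mseq)
    (hB3 : HypB3 R 𝓔 Mseq) (hΨ : ∀ u, Tendsto (fun n => Psi Mseq n u) atTop (𝓝 (Ψ u)))
    {u w : M} (huw : Ψ u = Ψ w) (horbit : ∀ j : ℤ, Ψ u ∉ (R.toEquiv ^ j) '' limitK 𝓔) :
    u = w := by
  have hlim : ∀ v, Ψ v = Ψ u → Tendsto (fun k => (Psi Mseq k).symm (Ψ u)) atTop (𝓝 v) := by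
    intro v hv
    rw [← hv]
    by_cases hout : ∀ᶠ m in atTop, Psi Mseq m v ∉ collUnion (iterColl R (𝓔 m) m)
    · exact tendsto_psi_symm_of_eventually_notMem hB1 hΨ hout
    by_cases hin : ∀ᶠ m in atTop, Psi Mseq m v ∈ collUnion (iterColl R (𝓔 m) m)
    · obtain ⟨j, hj⟩ := hinv.exists_zpow_mem_of_eventually_mem hrect hA1 hΨ hin
      exact absurd (hv ▸ hj) (horbit j)
    rw [not_eventually] at hout hin
    simp only [not_not] at hout
    exact hinv.tendsto_psi_symm_of_frequently_entry hrect hA1 hB1 hB3 hΨ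
      (frequently_not_and_succ hout hin)
  exact tendsto_nhds_unique (hlim u rfl) (hlim w huw.symm)

theorem HypB4.eventually_not_isOpen [CompactSpace M] [LocallyConnectedSpace M]
    (hB4 : HypB4 𝓔 Mseq) (hrect : ∀ n, IsRectCollection d (𝓔 n)) :
    ∀ᶠ k in atTop, ∀ X ∈ 𝓔 k, ¬ IsOpen X := by
  obtain ⟨δ, hδ, hball⟩ := lebesgue_number_lemma_of_metric isCompact_univ
    (fun x : M => isOpen_connectedComponent)
    (fun x _ => mem_iUnion.2 ⟨x, mem_connectedComponent⟩)
  obtain ⟨N, hN⟩ := hB4 (δ / 2) (half_pos hδ)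
  refine eventually_atTop.2 ⟨N, fun k hk X hX hXo => ?_⟩
  have hXrect := (hrect k).2.1 X hX
  have hQ : IsClopen (Psi Mseq k ⁻¹' X) :=
    ⟨hXrect.isCompact.isClosed.preimage (Psi Mseq k).continuous,
      hXo.preimage (Psi Mseq k).continuous⟩
  obtain ⟨p, hp⟩ := hXrect.nonempty.preimage (Psi Mseq k).surjective
  obtain ⟨x, hx⟩ := hball p trivial
  have hpQ : Metric.ball p δ ⊆ Psi Mseq k ⁻¹' X := by
    refine hx.trans ?_
    rw [connectedComponent_eq (hx (Metric.mem_ball_self hδ))]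
    exact hQ.connectedComponent_subset hp
  have := hN k hk p δ (hpQ.trans (preimage_mono (subset_sUnion_of_mem hX)))
  linarith

theorem RectanglesInvariant.interior_preimage_limitK_eq_empty
    (hinv : RectanglesInvariant R 𝓔 Mseq n₀) (hA1 : HypA1 R 𝓔) (hB4 : HypB4 𝓔 Mseq)
    (hΨ : ∀ u, Tendsto (fun n => Psi Mseq n u) atTop (𝓝 (Ψ u))) :
    interior (Ψ ⁻¹' limitK 𝓔) = ∅ := by
  refine eq_empty_iff_forall_notMem.2 fun c hc => ?_
  obtain ⟨r, hr, hball⟩ := Metric.isOpen_iff.1 isOpen_interior c hc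
  obtain ⟨N, hN⟩ := hB4 (r / 2) (half_pos hr)
  have := hN (max n₀ N) (le_max_right _ _) c r fun p hp =>
    hinv.psi_mem_collUnion_of_mem_limitK hA1 hΨ (interior_subset (s := Ψ ⁻¹' limitK 𝓔) (hball hp))
      (le_max_left _ _)
  linarith

end Metric

theorem Function.Semiconj.of_tendsto {ι X Y : Type*} [TopologicalSpace X] [UniformSpace Y]
    [T2Space Y] {l : Filter ι} [l.NeBot] {Ψn : ι → X → Y} {gn : ι → X → X} {Ψ : X → Y}
    {g : X → X} {R : Y → Y} (hR : Continuous R) (hΨ : TendstoUniformly Ψn Ψ l)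
    (hΨc : Continuous Ψ) (hg : ∀ x, Tendsto (gn · x) l (𝓝 (g x)))
    (h : ∀ n, Semiconj (Ψn n) (gn n) R) : Semiconj Ψ g R := fun x =>
  tendsto_nhds_unique (hΨ.tendsto_comp hΨc.continuousAt (hg x))
    (((hR.tendsto _).comp (hΨ.tendsto_at x)).congr fun n => (h n x).symm)

theorem Function.Semiconj.preimage_image_zpow {X Y : Type*} [TopologicalSpace X]
    [TopologicalSpace Y] {Ψ : X → Y} {g : X ≃ₜ X} {R : Y ≃ₜ Y} (h : Semiconj Ψ g R) (j : ℤ)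
    (S : Set Y) : Ψ ⁻¹' ((R ^ j) '' S) = (g ^ j) '' (Ψ ⁻¹' S) := by
  rw [Homeomorph.image_eq_preimage_symm, Homeomorph.image_eq_preimage_symm, ← preimage_comp,
    ← preimage_comp]
  congr 1
  funext x
  change (R ^ j)⁻¹ (Ψ x) = Ψ ((g ^ j)⁻¹ x)
  rw [← zpow_neg, ← zpow_neg]
  exact (h.homeomorph_zpow (-j) x).symm

theorem eq_univ_of_image_eq_univ {X Y : Type*} [TopologicalSpace X] {Ψ : X → Y} {F D : Set X}
    (hF : IsClosed F) (hD : Dense D) (hinj : ∀ x ∈ D, ∀ y, Ψ y = Ψ x → y = x)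
    (hΨF : Ψ '' F = univ) : F = univ := by
  refine eq_univ_of_univ_subset (hD.closure_eq ▸ hF.closure_subset_iff.2 fun x hx => ?_)
  obtain ⟨y, hy, hyx⟩ := hΨF.symm ▸ mem_univ (Ψ x)
  exact hinj x hx y hyx ▸ hy

theorem invariant_compact_onto_eq_univ_general (d : ℕ) (M : Type*) [MetricSpace M] [CompactSpace M]
    [ChartedSpace (EuclideanSpace ℝ (Fin d)) M]
    (R : M ≃ₜ M) (𝓔 : ℕ → Set (Set M)) (hrect : ∀ n, IsRectCollection d (𝓔 n))
    (hA1 : HypA1 R 𝓔)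
    (Mseq : ℕ → M ≃ₜ M)
    (hB1 : HypB1 R 𝓔 Mseq) (hB3 : HypB3 R 𝓔 Mseq)
    (hB4 : HypB4 𝓔 Mseq)
    (Ψ : M → M) (hΨc : Continuous Ψ)
    (hΨ : TendstoUniformly (fun n => ⇑(Psi Mseq n)) Ψ Filter.atTop)
    (g : M ≃ₜ M)
    (hg : TendstoUniformly (fun n => ⇑(gSeq R Mseq n)) (⇑g) Filter.atTop)
    (F : Set M) (hFcomp : IsCompact F)
    (hFonto : Ψ '' F = Set.univ) :
    F = Set.univ := by
  have := ChartedSpace.locallyConnectedSpace (EuclideanSpace ℝ (Fin d)) M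
  obtain ⟨n₀, hopen⟩ := eventually_atTop.1 (hB4.eventually_not_isOpen hrect)
  have hinv := rectanglesInvariant_of_not_isOpen hrect hA1 hB1 hopen
  have hsemi : Semiconj Ψ g R := Semiconj.of_tendsto R.continuous hΨ hΨc hg.tendsto_at
    fun n x => (Psi Mseq n).apply_symm_apply _
  have hnowhere : ∀ j : ℤ, interior (Ψ ⁻¹' ((R.toEquiv ^ j) '' limitK 𝓔)) = ∅ := by
    intro j
    rw [Homeomorph.coe_toEquiv_zpow, hsemi.preimage_image_zpow, ← Homeomorph.image_interior,
      hinv.interior_preimage_limitK_eq_empty hA1 hB4 hΨ.tendsto_at, image_empty]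
  have hclosed : ∀ j : ℤ, IsClosed (Ψ ⁻¹' ((R.toEquiv ^ j) '' limitK 𝓔)) := fun j => by
    rw [Homeomorph.coe_toEquiv_zpow]
    exact ((R ^ j).isClosed_image.2 (isClosed_limitK hrect)).preimage hΨc
  refine eq_univ_of_image_eq_univ hFcomp.isClosed
    (dense_iInter_of_isOpen (fun j => (hclosed j).isOpen_compl)
      fun j => interior_eq_empty_iff_dense_compl.1 (hnowhere j)) ?_ hFonto
  exact fun x hx y hyx => hinv.eq_of_notMem_orbit hrect hA1 hB1 hB3 hΨ.tendsto_at hyx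
    fun j hj => mem_iInter.1 hx j (show Ψ x ∈ _ from hyx ▸ hj)

/-- Under hypotheses `A₁`, `A₃`, `B₁`–`B₄`, any compact `g`-invariant
subset `F ⊆ M` with `Ψ(F) = M` is equal to `M`. -/
theorem invariant_compact_onto_eq_univ (d : ℕ) (M : Type*) [MetricSpace M] [CompactSpace M]
    [ChartedSpace (EuclideanSpace ℝ (Fin d)) M]
    (R : M ≃ₜ M) (𝓔 : ℕ → Set (Set M)) (hrect : ∀ n, IsRectCollection d (𝓔 n))
    (hA1 : HypA1 R 𝓔) (hA3 : HypA3 R 𝓔) (hEdge : EdgelessGraph R (𝓔 0))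
    (Mseq : ℕ → M ≃ₜ M)
    (hB1 : HypB1 R 𝓔 Mseq) (hB2 : HypB2 R 𝓔 Mseq) (hB3 : HypB3 R 𝓔 Mseq)
    (hB4 : HypB4 𝓔 Mseq)
    (Ψ : M → M) (hΨc : Continuous Ψ)
    (hΨ : TendstoUniformly (fun n => ⇑(Psi Mseq n)) Ψ Filter.atTop)
    (g : M ≃ₜ M)
    (hg : TendstoUniformly (fun n => ⇑(gSeq R Mseq n)) (⇑g) Filter.atTop)
    (F : Set M) (hFcomp : IsCompact F) (hFinv : (g : M → M) '' F = F)
    (hFonto : Ψ '' F = Set.univ) :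
    F = Set.univ :=
  invariant_compact_onto_eq_univ_general d M R 𝓔 hrect hA1 Mseq hB1 hB3 hB4 Ψ hΨc hΨ g hg F hFcomp
    hFonto
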